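/- Weighted interpolation estimate for block operators on cones: Let ℋ be a complex Hilbert space, I and J finite index sets, and T : ℋ^{|I|} → ℋ^{|J|} the bounded operator with block entries T_{ji} (bounded operators on ℋ), i.e. (TΨ)_j = ∑_{i∈I} T_{ji} Ψ_i. Let v = {v_i}_{i∈I}, w = {w_j}_{j∈J} be weights with V^{−1} ≤ v_i, w_j ≤ V for some V ≥ 1, let O : ℋ → ℋ be a bounded operator, let θ ≥ 0, and define the cone 𝒞(O,θ) = {Ψ ∈ ℋ^{|I|} : ‖OΨ_i − Ψ_i‖ ≤ θ‖Ψ‖₂ for all i ∈ I}. Set c_O(T) = max_{i∈I, j∈J} v_i w_j ‖T_{ji} O‖ and let ‖T‖_{2,2} be the operator norm of T from ℓ²(ℋ^{|I|}) to ℓ²(ℋ^{|J|}). Then for every Ψ ∈ 𝒞(O,θ) and every t ∈ [0,1]: ‖TΨ‖^{(w)}_{2/(1−t)} ≤ ( c_O(T) + |I| V² θ ‖T‖_{2,2} )^t · ‖T‖_{2,2}^{1−t} · ‖Ψ‖^{(v)}_{2/(1+t)}. -/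

import Mathlib

/-!
Stein's complex interpolation on a family adapted to the cone. With `p = 2 / (1 + t)` and
`q = 2 / (1 - t)` write `‖Ψ_i‖ = (v_i a_i)^t a_i` and `‖(TΨ)_j‖ = (w_j c_j)^{-t} c_j`, so that
`∑ a_i²` and `∑ c_j²` are the `p`-th and `q`-th powers of the two weighted norms, and pick `ψ_j`
with `‖ψ_j‖ = (w_j c_j)^t c_j` and `⟪ψ_j, (TΨ)_j⟫ = c_j²`. The entire function
`F z = ∑_j (w_j c_j)^{z-t} ⟪ψ_j, (T Φ(z))_j⟫`, where `Φ(z)_i = (v_i a_i)^{z-t} Ψ_i`, equals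
`∑ c_j²` at `z = t`. On `Re z = 0` Cauchy–Schwarz and `‖T‖_{2,2}` give
`|F z| ≤ √(∑ c²) ‖T‖ √(∑ a²)`. On `Re z = 1` the family `Φ(z)` has left the cone, but
`T_{ji} Φ(z)_i - T_{ji} O Φ(z)_i` is `(v_i a_i)^{1-t}` times `T_{ji}` of the cone defect of `Ψ_i`,
which `‖Ψ‖₂ ≤ (V √(∑ a²))^t √(∑ a²)` controls; so `|F z| ≤ (∑ c²) (c_O(T) + |I| V² θ ‖T‖) ∑ a²`.
The three-lines theorem interpolates.
-/

/-- The weighted `ℓ^p` norm `‖Ψ‖_p^{(v)} = (∑_i v_i^{p-2} ‖Ψ_i‖^p)^{1/p}` of a finite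
family of vectors in a normed space. -/
noncomputable def wNorm {H : Type*} [NormedAddCommGroup H] {I : Type*} [Fintype I]
    (v : I → ℝ) (p : ℝ) (Ψ : I → H) : ℝ :=
  (∑ i, v i ^ (p - 2) * ‖Ψ i‖ ^ p) ^ (1 / p)

open Finset
open scoped Complex InnerProductSpace

noncomputable def amplitude (v s ρ : ℝ) : ℝ := (v ^ (-s) * ρ) ^ (1 + s)⁻¹

section Amplitude

variable {v s ρ : ℝ}

lemma amplitude_nonneg (hv : 0 ≤ v) (hρ : 0 ≤ ρ) : 0 ≤ amplitude v s ρ := by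
  unfold amplitude; positivity

lemma amplitude_sq (hv : 0 < v) (hρ : 0 ≤ ρ) (hs : 0 < 1 + s) :
    amplitude v s ρ ^ 2 = v ^ (2 / (1 + s) - 2) * ρ ^ (2 / (1 + s)) := by
  rw [amplitude, ← Real.rpow_natCast, ← Real.rpow_mul (by positivity),
    Real.mul_rpow (by positivity) hρ, ← Real.rpow_mul hv.le]
  congr 2
  · field_simp; ring
  · push_cast; field_simp

lemma eq_rpow_mul_amplitude (hv : 0 < v) (hρ : 0 ≤ ρ) (hs : 0 < 1 + s) :
    ρ = (v * amplitude v s ρ) ^ s * amplitude v s ρ := by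
  rcases hρ.eq_or_lt with rfl | hρ
  · simp [amplitude, Real.zero_rpow (inv_ne_zero hs.ne')]
  have ha : 0 < amplitude v s ρ := by unfold amplitude; positivity
  rw [Real.mul_rpow hv.le ha.le, mul_assoc, ← Real.rpow_add_one ha.ne', amplitude,
    ← Real.rpow_mul (by positivity), add_comm s, inv_mul_cancel₀ hs.ne', Real.rpow_one,
    ← mul_assoc, ← Real.rpow_add hv, add_neg_cancel, Real.rpow_zero, one_mul]

end Amplitude

lemma wNorm_eq_sum_amplitude_sq {E I : Type*} [NormedAddCommGroup E] [Fintype I] {v : I → ℝ}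
    {s : ℝ} (hv : ∀ i, 0 < v i) (hs : 0 < 1 + s) (Ψ : I → E) :
    wNorm v (2 / (1 + s)) Ψ = (∑ i, amplitude (v i) s ‖Ψ i‖ ^ 2) ^ ((1 + s) / 2) := by
  simp only [wNorm, one_div_div, amplitude_sq (hv _) (norm_nonneg _) hs]

lemma rpow_le_of_le_interp {K S A C t : ℝ} (hK : 0 ≤ K) (hS : 0 ≤ S) (hA : 0 ≤ A)
    (hC : 0 ≤ C) (ht0 : 0 ≤ t) (ht1 : t < 1)
    (h : K ≤ (√K * A * √S) ^ (1 - t) * (K * (C * S)) ^ t) :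
    K ^ ((1 - t) / 2) ≤ C ^ t * A ^ (1 - t) * S ^ ((1 + t) / 2) := by
  rcases hK.eq_or_lt with rfl | hK
  · rw [Real.zero_rpow (by linarith)]; positivity
  have hK' : K ^ ((1 - t) / 2) * K ^ t = K ^ ((1 + t) / 2) := by
    rw [← Real.rpow_add hK]; ring_nf
  have hS' : S ^ ((1 - t) / 2) * S ^ t = S ^ ((1 + t) / 2) := by
    rw [← Real.rpow_add' hS (by linarith)]; ring_nf
  have hsplit : (√K * A * √S) ^ (1 - t) * (K * (C * S)) ^ t
      = K ^ ((1 + t) / 2) * (C ^ t * A ^ (1 - t) * S ^ ((1 + t) / 2)) := by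
    rw [Real.sqrt_eq_rpow, Real.sqrt_eq_rpow, Real.mul_rpow (by positivity) (by positivity),
      Real.mul_rpow (by positivity) hA, Real.mul_rpow hK.le (by positivity),
      Real.mul_rpow hC hS, ← Real.rpow_mul hK.le, ← Real.rpow_mul hS, ← hK', ← hS']
    ring_nf
  have hKsplit : K ^ ((1 - t) / 2) * K ^ ((1 + t) / 2) = K := by
    rw [← Real.rpow_add hK]; ring_nf; exact Real.rpow_one K
  refine le_of_mul_le_mul_right (a := K ^ ((1 + t) / 2)) ?_ (by positivity)
  calc K ^ ((1 - t) / 2) * K ^ ((1 + t) / 2) = K := hKsplit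
    _ ≤ _ := h
    _ = _ := by rw [hsplit, mul_comm]

/-- `d ^ (z - t)` as an entire function of `z`; since `Real.log 0 = 0` it is `1` at `d = 0`. -/
noncomputable def cpowShift (d t : ℝ) (z : ℂ) : ℂ := cexp ((z - t) * Real.log d)

section CpowShift

variable {d t : ℝ} {z : ℂ}

@[simp]
lemma cpowShift_self (d t : ℝ) : cpowShift d t t = 1 := by simp [cpowShift]

lemma differentiable_cpowShift (d t : ℝ) : Differentiable ℂ (cpowShift d t) := by
  unfold cpowShift; fun_prop

lemma norm_cpowShift (d t : ℝ) (z : ℂ) :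
    ‖cpowShift d t z‖ = Real.exp ((z.re - t) * Real.log d) := by
  simp [cpowShift, Complex.norm_exp]

lemma norm_cpowShift_le (hz : z.re ∈ Set.Icc 0 1) (ht : t ∈ Set.Icc 0 1) :
    ‖cpowShift d t z‖ ≤ Real.exp |Real.log d| := by
  have hzt : |z.re - t| ≤ 1 := abs_le.2 ⟨by linarith [hz.1, ht.2], by linarith [hz.2, ht.1]⟩
  rw [norm_cpowShift]
  gcongr
  calc (z.re - t) * Real.log d ≤ |z.re - t| * |Real.log d| := (le_abs_self _).trans (abs_mul _ _).le
    _ ≤ |Real.log d| := mul_le_of_le_one_left (abs_nonneg _) hzt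

variable {E : Type*} [NormedAddCommGroup E] [NormedSpace ℂ E] {x : E}

lemma norm_cpowShift_smul (hd : 0 ≤ d) (hx : d = 0 → x = 0) :
    ‖cpowShift d t z • x‖ = d ^ (z.re - t) * ‖x‖ := by
  rcases hd.eq_or_lt with rfl | hd
  · simp [hx rfl]
  rw [norm_smul, norm_cpowShift, Real.rpow_def_of_pos hd, mul_comm (Real.log d)]

lemma norm_cpowShift_mul_smul {v a : ℝ} (hv : 0 < v) (ha : 0 ≤ a)
    (hx : ‖x‖ = (v * a) ^ t * a) : ‖cpowShift (v * a) t z • x‖ = (v * a) ^ z.re * a := by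
  rcases ha.eq_or_lt with rfl | ha
  · simp_all
  rw [norm_cpowShift_smul (by positivity) (fun h => absurd h (by positivity)), hx, ← mul_assoc,
    ← Real.rpow_add (by positivity), sub_add_cancel]

end CpowShift

section BlockOperator

variable {𝕜 E F : Type*} [NontriviallyNormedField 𝕜] [SeminormedAddCommGroup E] [NormedSpace 𝕜 E]
  [SeminormedAddCommGroup F] [NormedSpace 𝕜 F]

lemma norm_apply_le_norm_comp_mul_add (B : E →L[𝕜] F) (O : E →L[𝕜] E) (x : E) :
    ‖B x‖ ≤ ‖B.comp O‖ * ‖x‖ + ‖B‖ * ‖O x - x‖ :=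
  calc ‖B x‖ = ‖B.comp O x - B (O x - x)‖ := by simp
    _ ≤ ‖B.comp O x‖ + ‖B (O x - x)‖ := norm_sub_le _ _
    _ ≤ _ := add_le_add ((B.comp O).le_opNorm _) (B.le_opNorm _)

lemma opNorm_block_le {I J : Type*} [Fintype I] [Fintype J]
    {p : ENNReal} [Fact (1 ≤ p)] {Tb : J → I → E →L[𝕜] F}
    {T : PiLp p (fun _ : I => E) →L[𝕜] PiLp p (fun _ : J => F)}
    (hT : ∀ Φ j, T Φ j = ∑ i, Tb j i (Φ i)) (j : J) (i : I) : ‖Tb j i‖ ≤ ‖T‖ := by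
  classical
  refine (Tb j i).opNorm_le_bound (norm_nonneg _) fun y => ?_
  let e : PiLp p (fun _ : I => E) := PiLp.single p i y
  have he : T e j = Tb j i y := by
    rw [hT, Finset.sum_eq_single i
      (fun k _ hk => by rw [PiLp.single_eq_of_ne (p := p) hk, map_zero]) (by simp),
      PiLp.single_eq_same]
  calc ‖Tb j i y‖ = ‖T e j‖ := by rw [he]
    _ ≤ ‖T e‖ := PiLp.norm_apply_le _ _
    _ ≤ ‖T‖ * ‖e‖ := T.le_opNorm _
    _ = ‖T‖ * ‖y‖ := by rw [PiLp.norm_single]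

end BlockOperator

lemma norm_le_rpow_mul_sqrt_sum_sq {E I : Type*} [SeminormedAddCommGroup E] [Fintype I]
    (Ψ : PiLp 2 fun _ : I => E) {d a : I → ℝ} {D t : ℝ} (hΨ : ∀ i, ‖Ψ i‖ = d i ^ t * a i)
    (hd : ∀ i, 0 ≤ d i ∧ d i ≤ D) (hD : 0 ≤ D) (ht : 0 ≤ t) :
    ‖Ψ‖ ≤ D ^ t * √(∑ i, a i ^ 2) := by
  rw [PiLp.norm_eq_of_L2, ← Real.sqrt_sq (by positivity : 0 ≤ D ^ t),
    ← Real.sqrt_mul (sq_nonneg _), Finset.mul_sum]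
  gcongr with i
  rw [hΨ, mul_pow]
  exact mul_le_mul_of_nonneg_right
    (pow_le_pow_left₀ (Real.rpow_nonneg (hd i).1 _) (Real.rpow_le_rpow (hd i).1 (hd i).2 ht) 2)
    (sq_nonneg _)

lemma exists_inner_eq_sq {E : Type*} [NormedAddCommGroup E] [InnerProductSpace ℂ E] {x : E}
    {w c t : ℝ} (hw : 0 < w) (hc : 0 ≤ c) (hx : ‖x‖ = (w * c) ^ (-t) * c) :
    ∃ ψ : E, ‖ψ‖ = (w * c) ^ t * c ∧ ⟪ψ, x⟫_ℂ = (c ^ 2 : ℝ) := by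
  rcases hc.eq_or_lt with rfl | hc
  · exact ⟨0, by simp, by simp⟩
  have hf : 0 < w * c := mul_pos hw hc
  refine ⟨(((w * c) ^ (2 * t) : ℝ) : ℂ) • x, ?_, ?_⟩
  · rw [norm_smul, Complex.norm_real, Real.norm_of_nonneg (by positivity), hx, ← mul_assoc,
      ← Real.rpow_add hf]
    ring_nf
  · have : (w * c) ^ (2 * t) * ‖x‖ ^ 2 = c ^ 2 := by
      rw [hx, mul_pow, ← Real.rpow_natCast, ← Real.rpow_mul hf.le, ← mul_assoc,
        ← Real.rpow_add hf, show 2 * t + -t * ((2 : ℕ) : ℝ) = 0 by push_cast; ring,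
        Real.rpow_zero, one_mul]
    rw [inner_smul_left, Complex.conj_ofReal, inner_self_eq_norm_sq_to_K, ← this]
    push_cast; rfl

section SteinPairing

variable {E I J : Type*} [NormedAddCommGroup E] [InnerProductSpace ℂ E] [Fintype I] [Fintype J]

noncomputable def steinPairing (Tb : J → I → E →L[ℂ] E) (f : J → ℝ) (ψ : J → E) (d : I → ℝ)
    (Ψ : I → E) (t : ℝ) (z : ℂ) : ℂ :=
  ∑ j, cpowShift (f j) t z * ⟪ψ j, ∑ i, Tb j i (cpowShift (d i) t z • Ψ i)⟫_ℂ

variable {Tb : J → I → E →L[ℂ] E} {f : J → ℝ} {ψ : J → E} {d : I → ℝ} {Ψ : I → E} {t : ℝ}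

lemma steinPairing_self : steinPairing Tb f ψ d Ψ t t = ∑ j, ⟪ψ j, ∑ i, Tb j i (Ψ i)⟫_ℂ := by
  simp [steinPairing]

lemma differentiable_steinPairing : Differentiable ℂ (steinPairing Tb f ψ d Ψ t) := by
  have hrow (j : J) : Differentiable ℂ fun z => ∑ i, Tb j i (cpowShift (d i) t z • Ψ i) :=
    Differentiable.fun_sum fun i _ =>
      (Tb j i).differentiable.comp ((differentiable_cpowShift _ _).smul_const _)
  exact Differentiable.fun_sum fun j _ =>
    (differentiable_cpowShift _ _).mul ((innerSL ℂ (ψ j)).differentiable.comp (hrow j))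

lemma bddAbove_norm_steinPairing (ht : t ∈ Set.Icc 0 1) :
    BddAbove ((norm ∘ steinPairing Tb f ψ d Ψ t) ''
      Complex.HadamardThreeLines.verticalClosedStrip 0 1) := by
  refine ⟨∑ j, Real.exp |Real.log (f j)| *
    (‖ψ j‖ * ∑ i, ‖Tb j i‖ * (Real.exp |Real.log (d i)| * ‖Ψ i‖)), ?_⟩
  rintro _ ⟨z, hz, rfl⟩
  refine (norm_sum_le _ _).trans (sum_le_sum fun j _ => ?_)
  rw [norm_mul]
  gcongr
  · exact norm_cpowShift_le hz ht
  refine (norm_inner_le_norm _ _).trans ?_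
  gcongr
  refine (norm_sum_le _ _).trans (sum_le_sum fun i _ => ((Tb j i).le_opNorm _).trans ?_)
  rw [norm_smul]
  gcongr
  exact norm_cpowShift_le hz ht

lemma norm_steinPairing_le (z : ℂ) :
    ‖steinPairing Tb f ψ d Ψ t z‖ ≤
      ∑ j, ‖cpowShift (f j) t z • ψ j‖ * ‖∑ i, Tb j i (cpowShift (d i) t z • Ψ i)‖ := by
  refine (norm_sum_le _ _).trans (sum_le_sum fun j _ => ?_)
  rw [norm_mul, norm_smul, mul_assoc]
  gcongr
  exact norm_inner_le_norm _ _

variable {v a : I → ℝ} {w c : J → ℝ}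

lemma norm_steinPairing_le_of_re_eq_zero
    (T : PiLp 2 (fun _ : I => E) →L[ℂ] PiLp 2 (fun _ : J => E))
    (hT : ∀ Φ j, T Φ j = ∑ i, Tb j i (Φ i)) (hv : ∀ i, 0 < v i) (ha : ∀ i, 0 ≤ a i)
    (hΨ : ∀ i, ‖Ψ i‖ = (v i * a i) ^ t * a i) (hw : ∀ j, 0 < w j) (hc : ∀ j, 0 ≤ c j)
    (hψ : ∀ j, ‖ψ j‖ = (w j * c j) ^ t * c j) {z : ℂ} (hz : z.re = 0) :
    ‖steinPairing Tb (fun j => w j * c j) ψ (fun i => v i * a i) Ψ t z‖ ≤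
      √(∑ j, c j ^ 2) * ‖T‖ * √(∑ i, a i ^ 2) := by
  let Φ : PiLp 2 (fun _ : I => E) := WithLp.toLp 2 fun i => cpowShift (v i * a i) t z • Ψ i
  have hΦ : ‖Φ‖ = √(∑ i, a i ^ 2) := by
    simp [Φ, PiLp.norm_eq_of_L2, norm_cpowShift_mul_smul (hv _) (ha _) (hΨ _), hz]
  calc _ ≤ ∑ j, c j * ‖T Φ j‖ := by
        refine (norm_steinPairing_le z).trans_eq (sum_congr rfl fun j _ => ?_)
        simp [norm_cpowShift_mul_smul (hw j) (hc j) (hψ j), hz, hT, Φ]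
    _ ≤ √(∑ j, c j ^ 2) * ‖T Φ‖ := by
        rw [PiLp.norm_eq_of_L2 (T Φ)]
        exact Real.sum_mul_le_sqrt_mul_sqrt _ _ _
    _ ≤ √(∑ j, c j ^ 2) * ‖T‖ * √(∑ i, a i ^ 2) := by
        rw [mul_assoc, ← hΦ]
        gcongr
        exact T.le_opNorm Φ

lemma norm_steinPairing_le_of_re_eq_one (hw : ∀ j, 0 < w j) (hc : ∀ j, 0 ≤ c j)
    (hψ : ∀ j, ‖ψ j‖ = (w j * c j) ^ t * c j) {z : ℂ} (hz : z.re = 1) {M : ℝ}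
    (hrow : ∀ j, w j * ∑ i, ‖Tb j i (cpowShift (d i) t z • Ψ i)‖ ≤ M) :
    ‖steinPairing Tb (fun j => w j * c j) ψ d Ψ t z‖ ≤ (∑ j, c j ^ 2) * M := by
  refine (norm_steinPairing_le z).trans ?_
  rw [sum_mul]
  refine sum_le_sum fun j _ => ?_
  rw [norm_cpowShift_mul_smul (hw j) (hc j) (hψ j), hz, Real.rpow_one]
  calc w j * c j * c j * ‖∑ i, Tb j i (cpowShift (d i) t z • Ψ i)‖
      = c j ^ 2 * (w j * ‖∑ i, Tb j i (cpowShift (d i) t z • Ψ i)‖) := by ring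
    _ ≤ c j ^ 2 * (w j * ∑ i, ‖Tb j i (cpowShift (d i) t z • Ψ i)‖) :=
        mul_le_mul_of_nonneg_left (mul_le_mul_of_nonneg_left (norm_sum_le _ _) (hw j).le)
          (sq_nonneg _)
    _ ≤ c j ^ 2 * M := mul_le_mul_of_nonneg_left (hrow j) (sq_nonneg _)

lemma norm_steinPairing_self_le
    (T : PiLp 2 (fun _ : I => E) →L[ℂ] PiLp 2 (fun _ : J => E))
    (hT : ∀ Φ j, T Φ j = ∑ i, Tb j i (Φ i)) (hv : ∀ i, 0 < v i) (ha : ∀ i, 0 ≤ a i)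
    (hΨ : ∀ i, ‖Ψ i‖ = (v i * a i) ^ t * a i) (hw : ∀ j, 0 < w j) (hc : ∀ j, 0 ≤ c j)
    (hψ : ∀ j, ‖ψ j‖ = (w j * c j) ^ t * c j) (ht0 : 0 ≤ t) (ht1 : t ≤ 1) {M : ℝ}
    (hM : ∀ z : ℂ, z.re = 1 →
      ‖steinPairing Tb (fun j => w j * c j) ψ (fun i => v i * a i) Ψ t z‖ ≤ M) :
    ‖steinPairing Tb (fun j => w j * c j) ψ (fun i => v i * a i) Ψ t t‖ ≤
      (√(∑ j, c j ^ 2) * ‖T‖ * √(∑ i, a i ^ 2)) ^ (1 - t) * M ^ t := by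
  simpa using Complex.HadamardThreeLines.norm_le_interp_of_mem_verticalClosedStrip₀₁' _
    (show (t : ℂ).re ∈ Set.Icc 0 1 by simpa using ⟨ht0, ht1⟩)
    differentiable_steinPairing.diffContOnCl (bddAbove_norm_steinPairing ⟨ht0, ht1⟩)
    (fun z hz => norm_steinPairing_le_of_re_eq_zero T hT hv ha hΨ hw hc hψ hz) hM

end SteinPairing

section Cone

variable {E I J : Type*} [NormedAddCommGroup E] [InnerProductSpace ℂ E] [Fintype I] [Fintype J]
  {Tb : J → I → E →L[ℂ] E} {T : PiLp 2 (fun _ : I => E) →L[ℂ] PiLp 2 (fun _ : J => E)}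
  {O : E →L[ℂ] E} {Ψ : PiLp 2 fun _ : I => E} {v a : I → ℝ} {θ V t c₀ : ℝ} {z : ℂ}

lemma norm_block_apply_cpowShift_smul_le (hT : ∀ Φ j, T Φ j = ∑ i, Tb j i (Φ i))
    (hθ : 0 ≤ θ) (hcone : ∀ i, ‖O (Ψ i) - Ψ i‖ ≤ θ * ‖Ψ‖) (hv : ∀ i, 0 < v i ∧ v i ≤ V)
    (ha : ∀ i, 0 ≤ a i) (hΨ : ∀ i, ‖Ψ i‖ = (v i * a i) ^ t * a i) (ht0 : 0 ≤ t) (ht1 : t ≤ 1)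
    (hz : z.re = 1) {w : ℝ} (hw : 0 ≤ w ∧ w ≤ V) (i : I) (j : J)
    (hc : v i * w * ‖(Tb j i).comp O‖ ≤ c₀) :
    w * ‖Tb j i (cpowShift (v i * a i) t z • Ψ i)‖ ≤
      c₀ * a i ^ 2 + V ^ 2 * θ * ‖T‖ * ∑ k, a k ^ 2 := by
  set S := ∑ k, a k ^ 2
  set D := V * √S
  have hV : 0 ≤ V := (hv i).1.le.trans (hv i).2
  have hd (k : I) : 0 ≤ v k * a k ∧ v k * a k ≤ D :=
    ⟨mul_nonneg (hv k).1.le (ha k), mul_le_mul (hv k).2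
      (Real.le_sqrt_of_sq_le (single_le_sum (fun k _ => sq_nonneg (a k)) (mem_univ k)))
      (ha k) hV⟩
  have hΨD : ‖Ψ‖ ≤ D ^ t * √S := norm_le_rpow_mul_sqrt_sum_sq Ψ hΨ hd (by positivity) ht0
  have hDS : D ^ (1 - t) * (D ^ t * √S) = V * S := by
    rw [← mul_assoc, ← Real.rpow_add' (by positivity) (by norm_num), sub_add_cancel,
      Real.rpow_one, mul_assoc, Real.mul_self_sqrt (by positivity)]
  have hzero (h : v i * a i = 0) : Ψ i = 0 := by
    rw [← norm_eq_zero, hΨ, h, (mul_eq_zero.mp h).resolve_left (hv i).1.ne', mul_zero]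
  set x := cpowShift (v i * a i) t z • Ψ i
  have hx : ‖x‖ = v i * a i * a i := by
    rw [norm_cpowShift_mul_smul (hv i).1 (ha i) (hΨ i), hz, Real.rpow_one]
  have hOx : ‖O x - x‖ ≤ D ^ (1 - t) * (θ * ‖Ψ‖) := by
    rw [map_smul, ← smul_sub,
      norm_cpowShift_smul (hd i).1 fun h => by rw [hzero h, map_zero, sub_zero], hz]
    exact mul_le_mul (Real.rpow_le_rpow (hd i).1 (hd i).2 (by linarith)) (hcone i)
      (norm_nonneg _) (by positivity)
  have hmain : w * (‖(Tb j i).comp O‖ * ‖x‖) ≤ c₀ * a i ^ 2 := by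
    rw [hx]
    calc _ = v i * w * ‖(Tb j i).comp O‖ * a i ^ 2 := by ring
      _ ≤ c₀ * a i ^ 2 := by gcongr
  have herr : w * (‖T‖ * ‖O x - x‖) ≤ V ^ 2 * θ * ‖T‖ * S := by
    calc _ ≤ V * (‖T‖ * (D ^ (1 - t) * (θ * (D ^ t * √S)))) := by
          gcongr
          · exact hw.2
          · exact hOx.trans (by gcongr)
      _ = V * ‖T‖ * θ * (D ^ (1 - t) * (D ^ t * √S)) := by ring
      _ = V ^ 2 * θ * ‖T‖ * S := by rw [hDS]; ring
  calc w * ‖Tb j i x‖ ≤ w * (‖(Tb j i).comp O‖ * ‖x‖ + ‖T‖ * ‖O x - x‖) := by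
        refine mul_le_mul_of_nonneg_left ((norm_apply_le_norm_comp_mul_add _ O _).trans ?_) hw.1
        gcongr
        exact opNorm_block_le hT j i
    _ ≤ _ := by rw [mul_add]; exact add_le_add hmain herr

lemma mul_sum_norm_block_apply_cpowShift_smul_le (hT : ∀ Φ j, T Φ j = ∑ i, Tb j i (Φ i))
    (hθ : 0 ≤ θ) (hcone : ∀ i, ‖O (Ψ i) - Ψ i‖ ≤ θ * ‖Ψ‖) (hv : ∀ i, 0 < v i ∧ v i ≤ V)
    (ha : ∀ i, 0 ≤ a i) (hΨ : ∀ i, ‖Ψ i‖ = (v i * a i) ^ t * a i) (ht0 : 0 ≤ t) (ht1 : t ≤ 1)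
    (hz : z.re = 1) {w : J → ℝ} (hw : ∀ j, 0 ≤ w j ∧ w j ≤ V)
    (hc : ∀ i j, v i * w j * ‖(Tb j i).comp O‖ ≤ c₀) (j : J) :
    w j * ∑ i, ‖Tb j i (cpowShift (v i * a i) t z • Ψ i)‖ ≤
      (c₀ + Fintype.card I * V ^ 2 * θ * ‖T‖) * ∑ i, a i ^ 2 := by
  rw [mul_sum]
  refine (sum_le_sum fun i _ => norm_block_apply_cpowShift_smul_le hT hθ hcone hv ha hΨ ht0 ht1
    hz (hw j) i j (hc i j)).trans_eq ?_
  rw [sum_add_distrib, ← mul_sum, sum_const, card_univ, nsmul_eq_mul]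
  ring

end Cone

theorem weighted_interpolation_cone_general
    {H : Type*} [NormedAddCommGroup H] [InnerProductSpace ℂ H]
    {I J : Type*} [Fintype I] [Fintype J]
    (Tb : J → I → (H →L[ℂ] H))
    (T : (PiLp 2 fun _ : I => H) →L[ℂ] (PiLp 2 fun _ : J => H))
    (hT : ∀ (Ψ : PiLp 2 fun _ : I => H) (j : J), T Ψ j = ∑ i, Tb j i (Ψ i))
    (v : I → ℝ) (w : J → ℝ) (V : ℝ) (hV : 1 ≤ V)
    (hv : ∀ i, V⁻¹ ≤ v i ∧ v i ≤ V) (hw : ∀ j, V⁻¹ ≤ w j ∧ w j ≤ V)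
    (O : H →L[ℂ] H) (θ : ℝ) (hθ : 0 ≤ θ)
    (Ψ : PiLp 2 fun _ : I => H)
    (hΨ : ∀ i, ‖O (Ψ i) - Ψ i‖ ≤ θ * ‖Ψ‖)
    (t : ℝ) (ht0 : 0 ≤ t) (ht1 : t < 1) :
    wNorm w (2 / (1 - t)) (T Ψ) ≤
      ((⨆ p : I × J, v p.1 * w p.2 * ‖(Tb p.2 p.1).comp O‖) +
          (Fintype.card I : ℝ) * V ^ 2 * θ * ‖T‖) ^ t *
        ‖T‖ ^ (1 - t) * wNorm v (2 / (1 + t)) Ψ := by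
  have hV0 : 0 < V⁻¹ := inv_pos.2 (by linarith)
  have hv0 (i : I) : 0 < v i := hV0.trans_le (hv i).1
  have hw0 (j : J) : 0 < w j := hV0.trans_le (hw j).1
  set a : I → ℝ := fun i => amplitude (v i) t ‖Ψ i‖
  set c : J → ℝ := fun j => amplitude (w j) (-t) ‖T Ψ j‖
  have ha (i : I) : 0 ≤ a i := amplitude_nonneg (hv0 i).le (norm_nonneg _)
  have hc (j : J) : 0 ≤ c j := amplitude_nonneg (hw0 j).le (norm_nonneg _)
  have hΨa (i : I) : ‖Ψ i‖ = (v i * a i) ^ t * a i :=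
    eq_rpow_mul_amplitude (hv0 i) (norm_nonneg _) (by linarith)
  choose ψ hψ hψT using fun j => exists_inner_eq_sq (hw0 j) (hc j)
    (eq_rpow_mul_amplitude (hw0 j) (norm_nonneg (T Ψ j)) (by linarith : 0 < 1 + -t))
  set c₀ := ⨆ p : I × J, v p.1 * w p.2 * ‖(Tb p.2 p.1).comp O‖
  have hc₀ (i : I) (j : J) : v i * w j * ‖(Tb j i).comp O‖ ≤ c₀ :=
    le_ciSup (f := fun p : I × J => v p.1 * w p.2 * ‖(Tb p.2 p.1).comp O‖)
      (Set.finite_range _).bddAbove (i, j)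
  have hc₀0 : 0 ≤ c₀ := Real.iSup_nonneg fun p => by
    have := hv0 p.1; have := hw0 p.2; positivity
  have key := norm_steinPairing_self_le T hT hv0 ha hΨa hw0 hc hψ ht0 ht1.le fun z hz =>
    norm_steinPairing_le_of_re_eq_one hw0 hc hψ hz
      (mul_sum_norm_block_apply_cpowShift_smul_le hT hθ hΨ (fun i => ⟨hv0 i, (hv i).2⟩) ha hΨa
        ht0 ht1.le hz (fun j => ⟨(hw0 j).le, (hw j).2⟩) hc₀)
  rw [steinPairing_self] at key
  simp only [← hT, hψT, ← Complex.ofReal_sum, Complex.norm_real,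
    Real.norm_of_nonneg (sum_nonneg fun j _ => sq_nonneg (c j))] at key
  have hwNorm := wNorm_eq_sum_amplitude_sq hw0 (s := -t) (by linarith) (T Ψ)
  rw [← sub_eq_add_neg] at hwNorm
  rw [hwNorm, wNorm_eq_sum_amplitude_sq hv0 (by linarith)]
  exact rpow_le_of_le_interp (by positivity) (by positivity) (by positivity) (by positivity)
    ht0 ht1 key

/-- **Weighted interpolation estimate for block operators on cones.**
Let `T : ℋ^{|I|} → ℋ^{|J|}` be the bounded block operator `(TΨ)_j = ∑_i T_{ji} Ψ_i`,
let `v`, `w` be weights in `[V⁻¹, V]`, `O` a bounded operator, `θ ≥ 0`, and let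
`c_O(T) = max_{i,j} v_i w_j ‖T_{ji} O‖`.  Then for every `Ψ` in the cone
`𝒞(O,θ) = {Ψ : ‖OΨ_i − Ψ_i‖ ≤ θ‖Ψ‖₂ ∀i}` and every `t ∈ [0,1)`,
`‖TΨ‖^{(w)}_{2/(1−t)} ≤ (c_O(T) + |I|V²θ‖T‖_{2,2})^t ‖T‖_{2,2}^{1−t} ‖Ψ‖^{(v)}_{2/(1+t)}`. -/
theorem weighted_interpolation_cone
    {H : Type*} [NormedAddCommGroup H] [InnerProductSpace ℂ H] [CompleteSpace H]
    {I J : Type*} [Fintype I] [Fintype J] [Nonempty I] [Nonempty J]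
    (Tb : J → I → (H →L[ℂ] H))
    (T : (PiLp 2 fun _ : I => H) →L[ℂ] (PiLp 2 fun _ : J => H))
    (hT : ∀ (Ψ : PiLp 2 fun _ : I => H) (j : J), T Ψ j = ∑ i, Tb j i (Ψ i))
    (v : I → ℝ) (w : J → ℝ) (V : ℝ) (hV : 1 ≤ V)
    (hv : ∀ i, V⁻¹ ≤ v i ∧ v i ≤ V) (hw : ∀ j, V⁻¹ ≤ w j ∧ w j ≤ V)
    (O : H →L[ℂ] H) (θ : ℝ) (hθ : 0 ≤ θ)
    (Ψ : PiLp 2 fun _ : I => H)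
    (hΨ : ∀ i, ‖O (Ψ i) - Ψ i‖ ≤ θ * ‖Ψ‖)
    (t : ℝ) (ht0 : 0 ≤ t) (ht1 : t < 1) :
    wNorm w (2 / (1 - t)) (T Ψ) ≤
      ((⨆ p : I × J, v p.1 * w p.2 * ‖(Tb p.2 p.1).comp O‖) +
          (Fintype.card I : ℝ) * V ^ 2 * θ * ‖T‖) ^ t *
        ‖T‖ ^ (1 - t) * wNorm v (2 / (1 + t)) Ψ :=
  weighted_interpolation_cone_general Tb T hT v w V hV hv hw O θ hθ Ψ hΨ t ht0 ht1
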